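/- arXiv:1207.6890 — 2 statements merged into one kernel-verified Lean document; each statement's English description precedes it below -/
import Mathlib

section
/- Let A be a unital C*-algebra, let k ≥ 2, and let T be a k×k matrix over A such that every diagonal entry of T equals 1, T is self-adjoint (i.e. T_{ji} = (T_{ij})* for all i, j), and η := max_{i≠j} ‖T_{ij}‖ satisfies η < 1/(2(k−1)). Then T is a positive and invertible element of M_k(A), ‖T − 1_k‖ ≤ (k−1)η, and ‖T^{−1/2} − 1_k‖ ≤ 2(k−1)η, where 1_k denotes the identity of M_k(A). -/
/-!
Since `T` is self-adjoint with unit diagonal, `T - 1` is self-adjoint, and its image in the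
C⋆-algebra has norm equal to its spectral radius, which is at most the `ℓ^∞` operator norm
(maximal row sum) of `T - 1`, hence at most `(k - 1) η < 1 / 2`. So the spectrum of `T` lies in
`[1 - ε, 1 + ε]` with `ε = (k - 1) η`, which gives strict positivity, and by the continuous
functional calculus `‖T^{-1/2} - 1‖ ≤ sup_{|x - 1| ≤ ε} |x^{-1/2} - 1| ≤ 2 ε`.
-/

theorem Real.abs_inv_sqrt_sub_one_le {x ε : ℝ} (hx : |x - 1| ≤ ε) (hε : ε < 1 / 2) :
    |(√x)⁻¹ - 1| ≤ 2 * ε := by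
  rw [abs_le] at hx ⊢
  have hε0 : 0 ≤ ε := by linarith
  have hs0 : 0 < √x := Real.sqrt_pos.mpr (by linarith)
  have hupper : √x ≤ 1 + ε := Real.sqrt_le_iff.mpr ⟨by linarith, by nlinarith⟩
  have hlower : 1 - ε ≤ √x := (Real.le_sqrt (by linarith) (by linarith)).mpr (by nlinarith)
  rw [inv_eq_one_div]
  constructor
  · have : (1 - 2 * ε) * √x ≤ 1 := by nlinarith
    linarith [(le_div_iff₀ hs0).mpr this]
  · have : 1 ≤ (1 + 2 * ε) * √x := by nlinarith
    linarith [(div_le_iff₀ hs0).mpr this]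

theorem AlgHomClass.norm_apply_le_of_isSelfAdjoint {F E B : Type*} [NormedRing E]
    [NormedAlgebra ℂ E] [CompleteSpace E] [NormOneClass E] [CStarAlgebra B] [FunLike F E B]
    [AlgHomClass F ℂ E B] (φ : F) {x : E} (hx : IsSelfAdjoint (φ x)) : ‖φ x‖ ≤ ‖x‖ := by
  suffices (‖φ x‖₊ : ENNReal) ≤ ‖x‖₊ by exact_mod_cast this
  calc (‖φ x‖₊ : ENNReal) = spectralRadius ℂ (φ x) := hx.spectralRadius_eq_nnnorm.symm
    _ ≤ spectralRadius ℂ x := iSup_le_iSup_of_subset (AlgHom.spectrum_apply_subset φ x)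
    _ ≤ ‖x‖₊ := spectrum.spectralRadius_le_nnnorm x

section LinftyOpNorm

attribute [local instance] Matrix.linftyOpSeminormedAddCommGroup Matrix.linftyOpNormedRing
  Matrix.linftyOpNormedAlgebra

theorem Matrix.linfty_opNorm_le_of_diag_eq_zero {n α : Type*} [Fintype n] [DecidableEq n]
    [SeminormedAddCommGroup α] {M : Matrix n n α} (hdiag : ∀ i, M i i = 0) {η : ℝ} (hη : 0 ≤ η)
    (hoff : ∀ i j, i ≠ j → ‖M i j‖ ≤ η) :
    ‖M‖ ≤ (Fintype.card n - 1 : ℕ) * η := by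
  have hrow (i : n) : ∑ j, ‖M i j‖ ≤ (Fintype.card n - 1 : ℕ) * η := calc
    ∑ j, ‖M i j‖ = ∑ j ∈ Finset.univ.erase i, ‖M i j‖ := by
      rw [Finset.sum_erase _ (by simp [hdiag])]
    _ ≤ (Finset.univ.erase i).card • η :=
      Finset.sum_le_card_nsmul _ _ _ fun j hj => hoff i j (Finset.ne_of_mem_erase hj).symm
    _ = (Fintype.card n - 1 : ℕ) * η := by
      rw [Finset.card_erase_of_mem (Finset.mem_univ i), Finset.card_univ, nsmul_eq_mul]
  have hc : 0 ≤ ((Fintype.card n - 1 : ℕ) : ℝ) * η := by positivity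
  rw [linfty_opNorm_def, ← Real.coe_toNNReal _ hc, NNReal.coe_le_coe, Finset.sup_le_iff]
  intro i _
  rw [← NNReal.coe_le_coe, Real.coe_toNNReal _ hc, NNReal.coe_sum]
  simpa using hrow i

theorem Matrix.norm_map_le_linfty_opNorm {n A B F : Type*} [Fintype n] [DecidableEq n]
    [CStarAlgebra A] [CStarAlgebra B] [FunLike F (Matrix n n A) B]
    [AlgHomClass F ℂ (Matrix n n A) B] (φ : F) {M : Matrix n n A} (hM : IsSelfAdjoint (φ M)) :
    ‖φ M‖ ≤ ‖M‖ := by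
  rcases subsingleton_or_nontrivial (Matrix n n A) with _ | hnt
  · simp [Subsingleton.elim M 0]
  have : Nontrivial (n → A) := @Function.nontrivial_of_nontrivial n (n → A) hnt
  have : Nontrivial A := Function.nontrivial_of_nontrivial n A
  have : Nonempty n := by
    by_contra h
    rw [not_nonempty_iff] at h
    exact not_subsingleton (n → A) inferInstance
  -- the uniformity of `linftyOpNormedRing` is the product one only up to unfolding
  have : @CompleteSpace (Matrix n n A) Matrix.linftyOpNormedRing.toUniformSpace :=
    (inferInstance : CompleteSpace (n → n → A))
  exact AlgHomClass.norm_apply_le_of_isSelfAdjoint φ hM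

theorem Matrix.norm_map_le_of_diag_eq_zero {n A B F : Type*} [Fintype n] [DecidableEq n]
    [CStarAlgebra A] [CStarAlgebra B] [FunLike F (Matrix n n A) B]
    [AlgHomClass F ℂ (Matrix n n A) B] (φ : F) {M : Matrix n n A} (hM : IsSelfAdjoint (φ M))
    (hdiag : ∀ i, M i i = 0) {η : ℝ} (hη : 0 ≤ η) (hoff : ∀ i j, i ≠ j → ‖M i j‖ ≤ η) :
    ‖φ M‖ ≤ (Fintype.card n - 1 : ℕ) * η :=
  (norm_map_le_linfty_opNorm φ hM).trans (linfty_opNorm_le_of_diag_eq_zero hdiag hη hoff)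

end LinftyOpNorm

namespace CStarAlgebra

variable {B : Type*} [CStarAlgebra B]

theorem abs_sub_one_le_norm_sub_one_of_mem_spectrum {a : B} {x : ℝ} (hx : x ∈ spectrum ℝ a) :
    |x - 1| ≤ ‖a - 1‖ := by
  have : Nontrivial B := by
    by_contra h
    rw [not_nontrivial_iff_subsingleton] at h
    simp [spectrum.of_subsingleton] at hx
  have hx' : x - 1 ∈ spectrum ℝ (a - 1) := by
    rw [← map_one (algebraMap ℝ B), ← spectrum.sub_singleton_eq]
    exact Set.sub_mem_sub hx rfl
  exact spectrum.norm_le_norm_of_mem hx'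

variable [PartialOrder B] [StarOrderedRing B]

theorem isStrictlyPositive_of_norm_sub_one_lt {a : B} (ha : IsSelfAdjoint a)
    (h : ‖a - 1‖ < 1) : IsStrictlyPositive a := by
  refine isStrictlyPositive_iff_isSelfAdjoint_and_spectrum_pos.mpr ⟨ha, fun x hx => ?_⟩
  have := (abs_sub_one_le_norm_sub_one_of_mem_spectrum hx).trans_lt h
  linarith [neg_abs_le (x - 1)]

theorem norm_inverse_sqrt_sub_one_le {a : B} (ha : IsSelfAdjoint a) {ε : ℝ}
    (h : ‖a - 1‖ ≤ ε) (hε : ε < 1 / 2) : ‖Ring.inverse (CFC.sqrt a) - 1‖ ≤ 2 * ε := by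
  have hpos : IsStrictlyPositive a := isStrictlyPositive_of_norm_sub_one_lt ha (by linarith)
  have hsqrt_ne : ∀ x ∈ spectrum ℝ a, √x ≠ 0 := fun x hx =>
    Real.sqrt_ne_zero'.mpr (hpos.spectrum_pos hx)
  have hinv : Ring.inverse (CFC.sqrt a) - 1 = cfc (fun x => (√x)⁻¹ + -1) a := by
    rw [cfc_add_const (-1) (fun x => (√x)⁻¹) a (Real.continuous_sqrt.continuousOn.inv₀ hsqrt_ne),
      cfc_inv _ a hsqrt_ne, CFC.sqrt_eq_real_sqrt a, cfcₙ_eq_cfc, map_neg, map_one,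
      sub_eq_add_neg]
  rw [hinv]
  refine norm_cfc_le (by linarith [norm_nonneg (a - 1)]) fun x hx => ?_
  rw [Real.norm_eq_abs, ← sub_eq_add_neg]
  exact Real.abs_inv_sqrt_sub_one_le ((abs_sub_one_le_norm_sub_one_of_mem_spectrum hx).trans h) hε

end CStarAlgebra

/-- `B`, together with the ⋆-algebra isomorphism `ψ`, plays the role of `M_k(A)` equipped with
its unique C⋆-norm. -/
theorem stmt_0 {A : Type*} [CStarAlgebra A] {k : ℕ} (hk : 2 ≤ k)
    {B : Type*} [CStarAlgebra B] [PartialOrder B] [StarOrderedRing B]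
    (ψ : Matrix (Fin k) (Fin k) A ≃⋆ₐ[ℂ] B)
    (T : Matrix (Fin k) (Fin k) A)
    (hdiag : ∀ i, T i i = 1)
    (hsa : ∀ i j, T j i = star (T i j))
    (η : ℝ) (hη : ∀ i j, i ≠ j → ‖T i j‖ ≤ η)
    (hηlt : η < 1 / (2 * ((k : ℝ) - 1))) :
    0 ≤ ψ T ∧ IsUnit (ψ T) ∧ ‖ψ T - 1‖ ≤ ((k : ℝ) - 1) * η ∧
      ‖Ring.inverse (CFC.sqrt (ψ T)) - 1‖ ≤ 2 * ((k : ℝ) - 1) * η := by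
  have hk1 : (1 : ℝ) ≤ k - 1 := by
    have : (2 : ℝ) ≤ k := by exact_mod_cast hk
    linarith
  have hη0 : 0 ≤ η :=
    (norm_nonneg _).trans (hη ⟨0, by omega⟩ ⟨1, by omega⟩ (by simp [Fin.ext_iff]))
  have hTsa : IsSelfAdjoint T := Matrix.ext fun i j => (hsa j i).symm
  have hnorm : ‖ψ T - 1‖ ≤ ((k : ℝ) - 1) * η := by
    have hbound := Matrix.norm_map_le_of_diag_eq_zero ψ ((hTsa.sub (.one _)).map ψ)
      (fun i => by simp [hdiag]) hη0
      fun i j hij => by simpa [Matrix.one_apply_ne hij] using hη i j hij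
    rwa [map_sub, map_one, Fintype.card_fin, Nat.cast_sub (by omega), Nat.cast_one] at hbound
  have hε : ((k : ℝ) - 1) * η < 1 / 2 := calc
    ((k : ℝ) - 1) * η < (k - 1) * (1 / (2 * (k - 1))) := mul_lt_mul_of_pos_left hηlt (by linarith)
    _ = 1 / 2 := by field_simp
  have hψsa : IsSelfAdjoint (ψ T) := hTsa.map ψ
  have hpos := CStarAlgebra.isStrictlyPositive_of_norm_sub_one_lt hψsa (by linarith)
  refine ⟨hpos.nonneg, hpos.isUnit, hnorm, ?_⟩
  rw [mul_assoc]
  exact CStarAlgebra.norm_inverse_sqrt_sub_one_le hψsa hnorm hε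
end

section
/- For every integer k ≥ 3 and every ε > 0 there exist projections p₁,…,p_k in the C*-algebra M_k(ℂ) of k×k complex matrices such that: (1) p₁ + ⋯ + p_k is invertible; (2) the unital *-subalgebra generated by p₁,…,p_k is all of M_k(ℂ); and (3) for all i ≠ j, p_i is unitarily equivalent to p_j in M_k(ℂ) and ‖p_i p_j‖ < ε. -/
open scoped Matrix.Norms.L2Operator

/-!
Take the unit vectors `vᵢ = (eᵢ + c·𝟙) / ‖eᵢ + c·𝟙‖` for a small `c > 0` and `pᵢ = |vᵢ⟩⟨vᵢ|`.
For `i ≠ j` all inner products `⟨vᵢ, vⱼ⟩` equal `(2c + kc²) / (1 + 2c + kc²)`: positive, but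
tending to `0` with `c`, and `‖pᵢ pⱼ‖ ≤ |⟨vᵢ, vⱼ⟩|` by the C*-identity. The matrix `V` with rows
`vᵢ` is a multiple of `1 + c·J`, hence invertible; so `∑ pᵢ = Vᵀ V̄` is invertible, and since
`pᵢ pⱼ = ⟨vᵢ, vⱼ⟩ |vᵢ⟩⟨vⱼ|` with a nonzero coefficient, the generated algebra contains every
`|vᵢ⟩⟨vⱼ| = Vᵀ Eᵢⱼ V̄`, and these span `M_k(ℂ)`. Finally `V` is invariant under simultaneous
permutations of rows and columns, so the transposition `(i j)` conjugates `pᵢ` to `pⱼ`.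
-/

open Matrix Filter Topology

theorem IsStarProjection.norm_mul_sq {E : Type*} [NormedRing E] [StarRing E] [CStarRing E]
    {p q : E} (hp : IsStarProjection p) (hq : IsSelfAdjoint q) :
    ‖p * q‖ ^ 2 = ‖q * p * q‖ := by
  rw [sq, ← CStarRing.norm_star_mul_self, star_mul, hp.isSelfAdjoint.star_eq, hq.star_eq,
    ← mul_assoc, mul_assoc q, hp.isIdempotentElem.eq]

theorem IsStarProjection.norm_mul_sq_le {𝕜 E : Type*} [NormedField 𝕜] [NormedRing E]
    [StarRing E] [CStarRing E] [NormedSpace 𝕜 E] {p q : E} (hp : IsStarProjection p)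
    (hq : IsStarProjection q) {t : 𝕜} (h : q * p * q = t • q) :
    ‖p * q‖ ^ 2 ≤ ‖t‖ := by
  rw [hp.norm_mul_sq hq.isSelfAdjoint, h]
  calc ‖t • q‖ ≤ ‖t‖ * ‖q‖ := norm_smul_le t q
    _ ≤ ‖t‖ * 1 := by gcongr; exact hq.norm_le
    _ = ‖t‖ := mul_one _

namespace Matrix

variable {n R : Type*} [Fintype n]

theorem vecMulVec_star_mul_vecMulVec_star [CommSemiring R] [StarRing R] (a b c d : n → R) :
    vecMulVec a (star b) * vecMulVec c (star d) = (star b ⬝ᵥ c) • vecMulVec a (star d) := by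
  rw [vecMulVec_mul_vecMulVec, vecMulVec_smul]

theorem isStarProjection_vecMulVec_star [CommSemiring R] [StarRing R] {v : n → R}
    (hv : star v ⬝ᵥ v = 1) : IsStarProjection (vecMulVec v (star v)) where
  isIdempotentElem := by
    rw [IsIdempotentElem, vecMulVec_star_mul_vecMulVec_star, hv, one_smul]
  isSelfAdjoint := by
    rw [IsSelfAdjoint, star_eq_conjTranspose, conjTranspose_vecMulVec, star_star]

theorem norm_vecMulVec_star_mul_vecMulVec_star_le {𝕜 : Type*} [RCLike 𝕜] [DecidableEq n]
    {u v : n → 𝕜} (hu : star u ⬝ᵥ u = 1) (hv : star v ⬝ᵥ v = 1) :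
    ‖vecMulVec u (star u) * vecMulVec v (star v)‖ ≤ ‖star u ⬝ᵥ v‖ := by
  have hvuv : vecMulVec v (star v) * vecMulVec u (star u) * vecMulVec v (star v) =
      (‖star u ⬝ᵥ v‖ ^ 2 : 𝕜) • vecMulVec v (star v) := by
    rw [vecMulVec_star_mul_vecMulVec_star, smul_mul_assoc, vecMulVec_star_mul_vecMulVec_star,
      smul_smul, star_dotProduct, RCLike.star_def, RCLike.conj_mul]
  have h := (isStarProjection_vecMulVec_star hu).norm_mul_sq_le
    (isStarProjection_vecMulVec_star hv) hvuv
  rw [norm_pow, RCLike.norm_ofReal, abs_norm] at h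
  exact (pow_le_pow_iff_left₀ (norm_nonneg _) (norm_nonneg _) two_ne_zero).1 h

theorem vecMulVec_star_eq_transpose_mul_single_mul [DecidableEq n] [CommSemiring R] [StarRing R]
    (V : Matrix n n R) (i j : n) :
    vecMulVec (V i) (star (V j)) = Vᵀ * single i j 1 * Vᵀᴴ := by
  rw [single_eq_single_vecMulVec_single, mul_vecMulVec, vecMulVec_mul, mulVec_single_one,
    single_one_vecMul]
  rfl

theorem sum_vecMulVec_star [DecidableEq n] [CommSemiring R] [StarRing R] (V : Matrix n n R) :
    ∑ i, vecMulVec (V i) (star (V i)) = Vᵀ * Vᵀᴴ := by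
  simp_rw [vecMulVec_star_eq_transpose_mul_single_mul, ← Finset.sum_mul, ← Finset.mul_sum,
    sum_single_one, Matrix.mul_one]

theorem adjoin_range_vecMulVec_star_eq_top [DecidableEq n] [Field R] [StarRing R]
    {V : Matrix n n R} (hV : IsUnit V) (hG : ∀ i j, star (V i) ⬝ᵥ V j ≠ 0) :
    StarAlgebra.adjoin R (Set.range fun i => vecMulVec (V i) (star (V i))) = ⊤ := by
  set T := StarAlgebra.adjoin R (Set.range fun i => vecMulVec (V i) (star (V i)))
  have hp (i : n) : vecMulVec (V i) (star (V i)) ∈ T :=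
    StarAlgebra.subset_adjoin R _ (Set.mem_range_self i)
  have hmem (i j : n) : Vᵀ * single i j 1 * Vᵀᴴ ∈ T := by
    have h := mul_mem (hp i) (hp j)
    rw [vecMulVec_star_mul_vecMulVec_star] at h
    simpa [hG i j, vecMulVec_star_eq_transpose_mul_single_mul] using
      SMulMemClass.smul_mem (star (V i) ⬝ᵥ V j)⁻¹ h
  have hconj (B : Matrix n n R) : Vᵀ * B * Vᵀᴴ ∈ T := by
    induction B using Matrix.induction_on' with
    | h_zero => simp [zero_mem]
    | h_add B C hB hC => simpa [Matrix.mul_add, Matrix.add_mul] using add_mem hB hC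
    | h_std_basis i j x =>
      have hx : single i j x = x • single i j (1 : R) := by rw [smul_single, smul_eq_mul, mul_one]
      rw [hx, Matrix.mul_smul, Matrix.smul_mul]
      exact SMulMemClass.smul_mem x (hmem i j)
  have hdet : IsUnit Vᵀ.det := (isUnit_iff_isUnit_det _).1 ((isUnit_transpose V).2 hV)
  have hdet' : IsUnit Vᵀᴴ.det :=
    (isUnit_iff_isUnit_det _).1 ((isUnit_conjTranspose _).2 ((isUnit_transpose V).2 hV))
  refine eq_top_iff.2 fun A _ => ?_
  have hA : A = Vᵀ * (Vᵀ⁻¹ * A * Vᵀᴴ⁻¹) * Vᵀᴴ := by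
    rw [Matrix.mul_assoc Vᵀ⁻¹, mul_nonsing_inv_cancel_left _ _ hdet,
      nonsing_inv_mul_cancel_right _ _ hdet']
  rw [hA]
  exact hconj _

theorem permMatrix_mul_mul_star_permMatrix [DecidableEq n] [CommRing R] [StarRing R]
    (σ : Equiv.Perm n) (A : Matrix n n R) :
    σ.permMatrix R * A * star (σ.permMatrix R) = A.submatrix σ σ := by
  rw [star_eq_conjTranspose, conjTranspose_permMatrix, PEquiv.toMatrix_toPEquiv_mul,
    PEquiv.mul_toMatrix_toPEquiv]
  rfl

theorem permMatrix_mem_unitary [DecidableEq n] [CommRing R] [StarRing R] (σ : Equiv.Perm n) :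
    σ.permMatrix R ∈ unitary (Matrix n n R) := by
  rw [Unitary.mem_iff, star_eq_conjTranspose, conjTranspose_permMatrix, ← permMatrix_mul,
    ← permMatrix_mul]
  simp

theorem permMatrix_mul_vecMulVec_star_mul [DecidableEq n] [CommRing R] [StarRing R]
    {σ : Equiv.Perm n} {V : Matrix n n R} (hV : V.submatrix σ σ = V) (i : n) :
    σ.permMatrix R * vecMulVec (V i) (star (V i)) * star (σ.permMatrix R) =
      vecMulVec (V (σ.symm i)) (star (V (σ.symm i))) := by
  have hrow (b : n) : V i (σ b) = V (σ.symm i) b := by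
    simpa using congrFun (congrFun hV (σ.symm i)) b
  rw [permMatrix_mul_mul_star_permMatrix]
  ext a b
  simp [vecMulVec_apply, hrow]

end Matrix

noncomputable def equiangularFrame (k : ℕ) (c : ℝ) : Matrix (Fin k) (Fin k) ℂ :=
  of fun a b => ((√(1 + 2 * c + k * c ^ 2))⁻¹ * ((if a = b then 1 else 0) + c) : ℝ)

section EquiangularFrame

variable {k : ℕ} {c : ℝ}

theorem equiangularFrame_submatrix (σ : Equiv.Perm (Fin k)) :
    (equiangularFrame k c).submatrix σ σ = equiangularFrame k c := by
  ext a b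
  simp [equiangularFrame, σ.injective.eq_iff]

theorem star_equiangularFrame (i : Fin k) :
    star (equiangularFrame k c i) = equiangularFrame k c i := by
  ext a
  simp [equiangularFrame]

theorem star_equiangularFrame_dotProduct (hc : 0 ≤ c) (i j : Fin k) :
    star (equiangularFrame k c i) ⬝ᵥ equiangularFrame k c j =
      (((if i = j then 1 else 0) + (2 * c + k * c ^ 2)) / (1 + 2 * c + k * c ^ 2) : ℝ) := by
  have hsq : (√(1 + 2 * c + k * c ^ 2)) ^ 2 = 1 + 2 * c + k * c ^ 2 :=
    Real.sq_sqrt (by positivity)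
  have hsum : ∑ a : Fin k, ((if i = a then (1 : ℝ) else 0) + c) * ((if j = a then 1 else 0) + c) =
      (if i = j then 1 else 0) + (2 * c + k * c ^ 2) := by
    simp only [mul_add, mul_ite, mul_one, mul_zero, add_mul, ite_mul, one_mul, zero_mul,
      Finset.sum_add_distrib, Finset.sum_ite_eq, Finset.mem_univ, if_true, Finset.sum_const,
      Finset.card_univ, Fintype.card_fin, nsmul_eq_mul]
    ring
  rw [star_equiangularFrame, dotProduct]
  simp only [equiangularFrame, of_apply, ← Complex.ofReal_mul, ← Complex.ofReal_sum]
  congr 1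
  rw [← hsum, Finset.sum_div]
  refine Finset.sum_congr rfl fun a _ => ?_
  rw [mul_mul_mul_comm, ← mul_inv, ← sq, hsq, inv_mul_eq_div]

theorem star_equiangularFrame_dotProduct_self (hc : 0 ≤ c) (i : Fin k) :
    star (equiangularFrame k c i) ⬝ᵥ equiangularFrame k c i = 1 := by
  have hden : 0 < 1 + 2 * c + k * c ^ 2 := by positivity
  rw [star_equiangularFrame_dotProduct hc, if_pos rfl, ← add_assoc, div_self hden.ne',
    Complex.ofReal_one]

theorem star_equiangularFrame_dotProduct_ne_zero (hc : 0 < c) (i j : Fin k) :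
    star (equiangularFrame k c i) ⬝ᵥ equiangularFrame k c j ≠ 0 := by
  rw [star_equiangularFrame_dotProduct hc.le]
  exact_mod_cast (by positivity : (0 : ℝ) < _).ne'

theorem norm_star_equiangularFrame_dotProduct_le (hc : 0 ≤ c) {i j : Fin k} (hij : i ≠ j) :
    ‖star (equiangularFrame k c i) ⬝ᵥ equiangularFrame k c j‖ ≤ 2 * c + k * c ^ 2 := by
  rw [star_equiangularFrame_dotProduct hc, if_neg hij, zero_add, Complex.norm_real,
    Real.norm_of_nonneg (by positivity)]
  exact div_le_self (by positivity) (by nlinarith)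

theorem isUnit_equiangularFrame (hc : 0 ≤ c) : IsUnit (equiangularFrame k c) := by
  have hV : equiangularFrame k c = ((√(1 + 2 * c + k * c ^ 2))⁻¹ : ℂ) •
      (1 + replicateCol Unit (fun _ : Fin k => (c : ℂ)) *
        replicateRow Unit (fun _ : Fin k => (1 : ℂ))) := by
    ext a b
    simp [equiangularFrame, mul_apply, one_apply, apply_ite]
  have hN : √(1 + 2 * c + k * c ^ 2) ≠ 0 := by positivity
  have hkc : (1 + k * c : ℂ) ≠ 0 := by exact_mod_cast (by positivity : (0 : ℝ) < 1 + k * c).ne'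
  rw [isUnit_iff_isUnit_det, hV, det_smul, det_one_add_replicateCol_mul_replicateRow,
    isUnit_iff_ne_zero]
  simp [hN, dotProduct, hkc]

end EquiangularFrame

theorem exists_pos_two_mul_add_mul_sq_lt (k : ℕ) {ε : ℝ} (hε : 0 < ε) :
    ∃ c > 0, 2 * c + k * c ^ 2 < ε := by
  have h : Tendsto (fun c : ℝ => 2 * c + k * c ^ 2) (𝓝[>] 0) (𝓝 0) := by
    simpa using ((by fun_prop : Continuous fun c : ℝ => 2 * c + k * c ^ 2).tendsto 0).mono_left
      (nhdsWithin_le_nhds (s := Set.Ioi 0))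
  obtain ⟨c, hcε, hc⟩ := ((h.eventually (gt_mem_nhds hε)).and self_mem_nhdsWithin).exists
  exact ⟨c, hc, hcε⟩

theorem stmt_6_general {k : ℕ} :
    ∀ ε > (0 : ℝ), ∃ p : Fin k → Matrix (Fin k) (Fin k) ℂ,
      (∀ i, IsSelfAdjoint (p i) ∧ p i * p i = p i) ∧
      IsUnit (∑ i, p i) ∧
      StarAlgebra.adjoin ℂ (Set.range p) = ⊤ ∧
      ∀ i j, i ≠ j →
        (∃ u ∈ unitary (Matrix (Fin k) (Fin k) ℂ), u * p i * star u = p j) ∧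
        ‖p i * p j‖ < ε := by
  intro ε hε
  obtain ⟨c, hc, hcε⟩ := exists_pos_two_mul_add_mul_sq_lt k hε
  set V := equiangularFrame k c
  have hV : IsUnit V := isUnit_equiangularFrame hc.le
  have hunit (i : Fin k) : star (V i) ⬝ᵥ V i = 1 := star_equiangularFrame_dotProduct_self hc.le i
  have hproj (i : Fin k) : IsStarProjection (vecMulVec (V i) (star (V i))) :=
    isStarProjection_vecMulVec_star (hunit i)
  refine ⟨fun i => vecMulVec (V i) (star (V i)),
    fun i => ⟨(hproj i).isSelfAdjoint, (hproj i).isIdempotentElem⟩, ?_,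
    adjoin_range_vecMulVec_star_eq_top hV (star_equiangularFrame_dotProduct_ne_zero hc),
    fun i j hij => ⟨?_, ?_⟩⟩
  · rw [sum_vecMulVec_star]
    exact ((isUnit_transpose V).2 hV).mul ((isUnit_conjTranspose _).2 ((isUnit_transpose V).2 hV))
  · refine ⟨(Equiv.swap i j).permMatrix ℂ, permMatrix_mem_unitary _, ?_⟩
    rw [permMatrix_mul_vecMulVec_star_mul (equiangularFrame_submatrix _), Equiv.symm_swap,
      Equiv.swap_apply_left]
  · calc ‖vecMulVec (V i) (star (V i)) * vecMulVec (V j) (star (V j))‖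
        ≤ ‖star (V i) ⬝ᵥ V j‖ := norm_vecMulVec_star_mul_vecMulVec_star_le (hunit i) (hunit j)
      _ ≤ 2 * c + k * c ^ 2 := norm_star_equiangularFrame_dotProduct_le hc.le hij
      _ < ε := hcε

/-- for every `k ≥ 3`, `M_k(ℂ)` is generated by `k` mutually unitarily
equivalent and almost mutually orthogonal projections. Here `M_k(ℂ)` carries the
operator (C*-) norm. -/
theorem stmt_6 {k : ℕ} (hk : 3 ≤ k) :
    ∀ ε > (0 : ℝ), ∃ p : Fin k → Matrix (Fin k) (Fin k) ℂ,
      (∀ i, IsSelfAdjoint (p i) ∧ p i * p i = p i) ∧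
      IsUnit (∑ i, p i) ∧
      StarAlgebra.adjoin ℂ (Set.range p) = ⊤ ∧
      ∀ i j, i ≠ j →
        (∃ u ∈ unitary (Matrix (Fin k) (Fin k) ℂ), u * p i * star u = p j) ∧
        ‖p i * p j‖ < ε :=
  stmt_6_general
end
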